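/- arXiv:2012.09880 — 2 statements merged into one kernel-verified Lean document; each statement's English description precedes it below -/
import Mathlib

section
/- Let $\Sigma$ be a reduced crystallographic root system with positive roots $\Sigma^+$ and Weyl group $W$, and let $\rho$ be half the sum of the positive roots. Let $\mu$ be a dominant minuscule coweight (so $\langle \alpha, \mu\rangle \in \{-1,0,1\}$ for all roots $\alpha$), let $\mu_{\mathrm{adom}} = w_0(\mu)$ be the antidominant element of its Weyl orbit, and let $\lambda \in W\cdot\mu$ be any element of the orbit. Then $\#\{\alpha \in \Sigma^+ \mid \langle \alpha, \lambda \rangle = 1\} = \langle \rho, \lambda - \mu_{\mathrm{adom}} \rangle.$ -/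
open Finset Module
open scoped Classical

/-- A reduced crystallographic root system with a chosen positive system,
realized via roots in the dual of the coweight space `V`. -/
structure RootSystemData (V : Type*) [AddCommGroup V] [Module ℝ V] where
  roots : Finset (Module.Dual ℝ V)
  coroot : Module.Dual ℝ V → V
  pos : Finset (Module.Dual ℝ V)
  zero_not_mem : (0 : Module.Dual ℝ V) ∉ roots
  neg_mem : ∀ α ∈ roots, -α ∈ roots
  pos_subset : pos ⊆ roots
  pos_iff : ∀ α ∈ roots, (α ∈ pos ↔ -α ∉ pos)
  reduced : ∀ α ∈ roots, ∀ c : ℝ, c • α ∈ roots → c = 1 ∨ c = -1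
  root_coroot_two : ∀ α ∈ roots, α (coroot α) = 2
  coroot_neg : ∀ α ∈ roots, coroot (-α) = - coroot α
  crystallographic : ∀ α ∈ roots, ∀ β ∈ roots, ∃ n : ℤ, (n : ℝ) = α (coroot β)
  reflect_mem : ∀ α ∈ roots, ∀ β ∈ roots, β - β (coroot α) • α ∈ roots

namespace RootSystemData

variable {V : Type*} [AddCommGroup V] [Module ℝ V] (D : RootSystemData V)

/-- Half the sum of the positive roots. -/
noncomputable def rho : Module.Dual ℝ V := (2⁻¹ : ℝ) • ∑ α ∈ D.pos, α

/-- A coweight is minuscule if its pairing with every root lies in {-1,0,1}. -/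
def Minuscule (lam : V) : Prop :=
  ∀ α ∈ D.roots, α lam = 1 ∨ α lam = 0 ∨ α lam = -1

/-- A coweight is dominant if it pairs nonnegatively with every positive root. -/
def Dominant (lam : V) : Prop := ∀ α ∈ D.pos, 0 ≤ α lam

/-- The Weyl group, generated by the reflections on the coweight space. -/
def weylGroup : Subgroup (V ≃ₗ[ℝ] V) :=
  Subgroup.closure {g | ∃ α ∈ D.roots, ∀ v : V, g v = v - α v • D.coroot α}

end RootSystemData

/-- The induced (contragredient) action of an automorphism of the coweight
space on roots. -/
def dualAct {V : Type*} [AddCommGroup V] [Module ℝ V]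
    (g : V ≃ₗ[ℝ] V) (α : Module.Dual ℝ V) : Module.Dual ℝ V :=
  α ∘ₗ g.symm.toLinearMap

namespace RootSystemData

variable {V : Type*} [AddCommGroup V] [Module ℝ V] (D : RootSystemData V)

/-- Length of a Weyl group element = number of inversions. -/
noncomputable def len (g : V ≃ₗ[ℝ] V) : ℕ :=
  (D.pos.filter (fun α => dualAct g α ∉ D.pos)).card

end RootSystemData

section Aux
variable {V : Type*} [AddCommGroup V] [Module ℝ V]

lemma dualAct_apply' (g : V ≃ₗ[ℝ] V) (α : Module.Dual ℝ V) (v : V) :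
    dualAct g α v = α (g.symm v) := rfl

lemma dualAct_mul (g h : V ≃ₗ[ℝ] V) (α : Module.Dual ℝ V) :
    dualAct (g * h) α = dualAct g (dualAct h α) := rfl

lemma dualAct_one (α : Module.Dual ℝ V) : dualAct (1 : V ≃ₗ[ℝ] V) α = α := rfl

lemma dualAct_injective (g : V ≃ₗ[ℝ] V) : Function.Injective (dualAct g) := by
  intro α β h
  ext v
  have := congrArg (fun f : Module.Dual ℝ V => f (g v)) h
  simpa [dualAct_apply'] using this

lemma dualAct_inv_apply (g : V ≃ₗ[ℝ] V) (α : Module.Dual ℝ V) (v : V) :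
    dualAct g⁻¹ α v = α (g v) := rfl

namespace RootSystemData

variable (D : RootSystemData V)

lemma weyl_root_mem {g : V ≃ₗ[ℝ] V} (hg : g ∈ D.weylGroup) :
    ∀ α ∈ D.roots, dualAct g α ∈ D.roots := by
  refine Subgroup.closure_induction (p := fun g _ => ∀ α ∈ D.roots, dualAct g α ∈ D.roots)
    ?_ ?_ ?_ ?_ hg
  · rintro x ⟨β, hβ, hx⟩ α hα
    -- x is the reflection in β; x is an involution, so x.symm = x
    have hinv : ∀ v, x (x v) = v := by
      intro v
      rw [hx, hx]
      simp only [map_sub, map_smul, smul_eq_mul]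
      rw [D.root_coroot_two β hβ]
      module
    have hsymm : ∀ v, x.symm v = x v := by
      intro v
      conv_lhs => rw [← hinv v]
      exact x.symm_apply_apply (x v)
    have : dualAct x α = α - α (D.coroot β) • β := by
      ext v
      rw [dualAct_apply', hsymm, hx]
      simp [mul_comm]
    rw [this]
    exact D.reflect_mem β hβ α hα
  · intro α hα; simpa [dualAct_one] using hα
  · intro x y _ _ hx hy α hα
    rw [dualAct_mul]
    exact hx _ (hy _ hα)
  · intro x _ hx α hα
    -- dualAct x maps roots into roots injectively, hence bijectively
    have himg : D.roots.image (dualAct x) = D.roots := by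
      apply Finset.eq_of_subset_of_card_le
      · intro β hβ
        obtain ⟨γ, hγ, rfl⟩ := Finset.mem_image.mp hβ
        exact hx γ hγ
      · rw [Finset.card_image_of_injective _ (dualAct_injective x)]
    rw [← himg] at hα
    obtain ⟨γ, hγ, rfl⟩ := Finset.mem_image.mp hα
    rw [← dualAct_mul, inv_mul_cancel, dualAct_one]
    exact hγ

lemma weyl_pairing (D : RootSystemData V) {g : V ≃ₗ[ℝ] V} (α : Module.Dual ℝ V) (v : V) :
    α (g v) = dualAct g⁻¹ α v := rfl

end RootSystemData
end Aux

/-- For a dominant minuscule coweight `μ`, `μadom = w₀(μ)` antidominant in its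
Weyl orbit, and `lam = w(μ)` in the Weyl orbit of `μ`, the number of positive
roots pairing to `1` with `lam` equals `⟨ρ, lam - μadom⟩`. -/
theorem count_pairing_one_eq_rho_pairing {V : Type*} [AddCommGroup V] [Module ℝ V]
    (D : RootSystemData V) (μ lam μadom : V)
    (hdom : D.Dominant μ) (hmin : D.Minuscule μ)
    (w w₀ : V ≃ₗ[ℝ] V) (hw : w ∈ D.weylGroup) (hw₀ : w₀ ∈ D.weylGroup)
    (hlam : lam = w μ) (hμadom : μadom = w₀ μ)
    (hanti : ∀ α ∈ D.pos, α μadom ≤ 0) :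
    ((D.pos.filter (fun α => α lam = 1)).card : ℝ)
      = D.rho lam - D.rho μadom := by
  classical
  -- any element of the orbit is "minuscule" too
  have horbit : ∀ (g : V ≃ₗ[ℝ] V), g ∈ D.weylGroup → ∀ α ∈ D.roots,
      α (g μ) = 1 ∨ α (g μ) = 0 ∨ α (g μ) = -1 := by
    intro g hg α hα
    have h1 : α (g μ) = dualAct g⁻¹ α μ := rfl
    rw [h1]
    exact hmin _ (D.weyl_root_mem (inv_mem hg) α hα)
  have hminlam : ∀ α ∈ D.roots, α lam = 1 ∨ α lam = 0 ∨ α lam = -1 := by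
    rw [hlam]; exact horbit w hw
  have hminadom : ∀ α ∈ D.roots, α μadom = 1 ∨ α μadom = 0 ∨ α μadom = -1 := by
    rw [hμadom]; exact horbit w₀ hw₀
  -- rho evaluation
  have hrho : ∀ v : V, (∀ α ∈ D.pos, α v = 1 ∨ α v = 0 ∨ α v = -1) →
      D.rho v = (2⁻¹ : ℝ) * (((D.pos.filter (fun α => α v = 1)).card : ℝ)
        - ((D.pos.filter (fun α => α v = -1)).card : ℝ)) := by
    intro v htri
    have hsum : ∑ α ∈ D.pos, α v
        = ((D.pos.filter (fun α => α v = 1)).card : ℝ)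
          - ((D.pos.filter (fun α => α v = -1)).card : ℝ) := by
      have : ∀ α ∈ D.pos, α v = (if α v = 1 then (1:ℝ) else 0)
          - (if α v = -1 then (1:ℝ) else 0) := by
        intro α hα
        rcases htri α hα with h | h | h <;> rw [h] <;> norm_num
      rw [Finset.sum_congr rfl this, Finset.sum_sub_distrib]
      simp [Finset.sum_boole]
    show ((2⁻¹ : ℝ) • ∑ α ∈ D.pos, α) v = _
    rw [LinearMap.smul_apply, smul_eq_mul]
    congr 1
    rw [LinearMap.sum_apply]
    exact hsum
  -- splitting the nonzero-pairing count
  have hsplit : ∀ v : V, (∀ α ∈ D.pos, α v = 1 ∨ α v = 0 ∨ α v = -1) →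
      (D.pos.filter (fun α => α v ≠ 0)).card
        = (D.pos.filter (fun α => α v = 1)).card
          + (D.pos.filter (fun α => α v = -1)).card := by
    intro v htri
    have hun : D.pos.filter (fun α => α v ≠ 0)
        = D.pos.filter (fun α => α v = 1) ∪ D.pos.filter (fun α => α v = -1) := by
      ext α
      simp only [Finset.mem_filter, Finset.mem_union]
      constructor
      · rintro ⟨hα, hne⟩
        rcases htri α hα with h | h | h
        · exact Or.inl ⟨hα, h⟩
        · exact absurd h hne
        · exact Or.inr ⟨hα, h⟩
      · rintro (⟨hα, h⟩ | ⟨hα, h⟩) <;> exact ⟨hα, by rw [h]; norm_num⟩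
    rw [hun, Finset.card_union_of_disjoint]
    rw [Finset.disjoint_filter]
    intro α _ h1 h2
    rw [h1] at h2; norm_num at h2
  -- doubling: roots = pos ⊔ -pos
  have hdouble : ∀ v : V, (D.roots.filter (fun α => α v ≠ 0)).card
      = 2 * (D.pos.filter (fun α => α v ≠ 0)).card := by
    intro v
    have hpart := Finset.card_filter_add_card_filter_not
      (s := D.roots.filter (fun α => α v ≠ 0)) (p := fun α => α ∈ D.pos)
    have h1 : (D.roots.filter (fun α => α v ≠ 0)).filter (fun α => α ∈ D.pos)
        = D.pos.filter (fun α => α v ≠ 0) := by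
      ext α
      simp only [Finset.mem_filter]
      exact ⟨fun ⟨⟨_, h⟩, hp⟩ => ⟨hp, h⟩, fun ⟨hp, h⟩ => ⟨⟨D.pos_subset hp, h⟩, hp⟩⟩
    have h2 : ((D.roots.filter (fun α => α v ≠ 0)).filter (fun α => ¬ α ∈ D.pos)).card
        = (D.pos.filter (fun α => α v ≠ 0)).card := by
      refine Finset.card_nbij' (fun α => -α) (fun α => -α) ?_ ?_ ?_ ?_
      · intro α hα
        simp only [Finset.mem_coe, Finset.mem_filter] at hα ⊢
        obtain ⟨⟨hr, hnz⟩, hnp⟩ := hα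
        have hneg : -α ∈ D.pos := by
          by_contra hc
          exact hnp ((D.pos_iff α hr).mpr hc)
        refine ⟨hneg, ?_⟩
        simpa using hnz
      · intro α hα
        simp only [Finset.mem_coe, Finset.mem_filter] at hα ⊢
        obtain ⟨hp, hnz⟩ := hα
        have hr := D.pos_subset hp
        refine ⟨⟨D.neg_mem α hr, by simpa using hnz⟩, ?_⟩
        have := (D.pos_iff α hr).mp hp
        simpa using this
      · intro α _; simp
      · intro α _; simp
    rw [h1] at hpart
    omega
  -- Weyl invariance of the nonzero-pairing count over roots
  have hinv : (D.roots.filter (fun α => α lam ≠ 0)).card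
      = (D.roots.filter (fun α => α μadom ≠ 0)).card := by
    set g : V ≃ₗ[ℝ] V := w₀ * w⁻¹ with hgdef
    have hgW : g ∈ D.weylGroup := mul_mem hw₀ (inv_mem hw)
    have hgWinv : g⁻¹ ∈ D.weylGroup := inv_mem hgW
    have hkey : ∀ α : Module.Dual ℝ V, dualAct g α μadom = α lam := by
      intro α
      have h1 : dualAct g α μadom = α (g⁻¹ μadom) := rfl
      rw [h1, hμadom, hlam, hgdef, mul_inv_rev, inv_inv]
      have : (w * w₀⁻¹) (w₀ μ) = w (w₀⁻¹ (w₀ μ)) := rfl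
      rw [this]
      exact congrArg (fun x => α (w x)) (w₀.symm_apply_apply μ)
    refine Finset.card_nbij' (dualAct g) (dualAct g⁻¹) ?_ ?_ ?_ ?_
    · intro α hα
      simp only [Finset.mem_coe, Finset.mem_filter] at hα ⊢
      exact ⟨D.weyl_root_mem hgW α hα.1, by rw [hkey]; exact hα.2⟩
    · intro α hα
      simp only [Finset.mem_coe, Finset.mem_filter] at hα ⊢
      refine ⟨D.weyl_root_mem hgWinv α hα.1, ?_⟩
      have : α = dualAct g (dualAct g⁻¹ α) := by
        rw [← dualAct_mul, mul_inv_cancel, dualAct_one]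
      rw [this, hkey] at hα
      exact hα.2
    · intro α _
      rw [← dualAct_mul, inv_mul_cancel, dualAct_one]
    · intro α _
      rw [← dualAct_mul, mul_inv_cancel, dualAct_one]
  -- no positive root pairs to 1 with the antidominant element
  have hM1 : D.pos.filter (fun α => α μadom = 1) = ∅ := by
    refine Finset.filter_eq_empty_iff.mpr ?_
    intro α hα h1
    have := hanti α hα
    rw [h1] at this; norm_num at this
  -- assemble
  have hposmin : ∀ α ∈ D.pos, α lam = 1 ∨ α lam = 0 ∨ α lam = -1 :=
    fun α hα => hminlam α (D.pos_subset hα)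
  have hposadom : ∀ α ∈ D.pos, α μadom = 1 ∨ α μadom = 0 ∨ α μadom = -1 :=
    fun α hα => hminadom α (D.pos_subset hα)
  have hcount : (D.pos.filter (fun α => α lam = 1)).card
      + (D.pos.filter (fun α => α lam = -1)).card
      = (D.pos.filter (fun α => α μadom = -1)).card := by
    have e1 := hsplit lam hposmin
    have e2 := hsplit μadom hposadom
    have e3 := hdouble lam
    have e4 := hdouble μadom
    rw [hM1] at e2
    simp only [Finset.card_empty, zero_add] at e2
    omega
  rw [hrho lam hposmin, hrho μadom hposadom, hM1]
  simp only [Finset.card_empty, Nat.cast_zero, zero_sub]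
  have := congrArg (fun n : ℕ => (n : ℝ)) hcount
  push_cast at this
  linarith
end

section
/- Let $p$ be a prime, $K = \mathrm{GL}_2(\mathbb{Z}_p)$, and let $\lambda = (a, b) \in \mathbb{Z}^2$ with $a \geq b$ (dominant). For $\mu = (c, d) \in \mathbb{Z}^2$ with $c \geq d$, the intersection $U(\mathbb{Q}_p)\,\mathrm{diag}(p^{a}, p^{b})\,K \cap K\,\mathrm{diag}(p^{c}, p^{d})\,K$ is nonempty if and only if $a + b = c + d$ and $a \leq c$, where $U$ denotes the subgroup of upper triangular unipotent matrices. -/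
/-- Membership in `K = GL₂(ℤ_p)`: all entries are `p`-adic integers and the
determinant is a `p`-adic unit. -/
def IsInGL2Zp {p : ℕ} [Fact p.Prime] (k : Matrix (Fin 2) (Fin 2) ℚ_[p]) : Prop :=
  (∀ i j, ‖k i j‖ ≤ 1) ∧ ‖k.det‖ = 1

/-- For dominant `λ = (a,b)` and `μ = (c,d)`, the intersection
`U(ℚ_p) diag(p^a, p^b) K ∩ K diag(p^c, p^d) K` is nonempty iff `a+b = c+d` and
`a ≤ c`, where `U` is the upper triangular unipotent subgroup and
`K = GL₂(ℤ_p)`. -/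
theorem semiinfinite_cartan_intersection_nonempty_iff
    (p : ℕ) [Fact p.Prime] (a b c d : ℤ) (hab : b ≤ a) (hcd : d ≤ c) :
    (∃ (u : ℚ_[p]) (k k₁ k₂ : Matrix (Fin 2) (Fin 2) ℚ_[p]),
      IsInGL2Zp k ∧ IsInGL2Zp k₁ ∧ IsInGL2Zp k₂ ∧
      (!![1, u; 0, 1] : Matrix (Fin 2) (Fin 2) ℚ_[p]) *
          !![(p : ℚ_[p]) ^ a, 0; 0, (p : ℚ_[p]) ^ b] * k =
        k₁ * !![(p : ℚ_[p]) ^ c, 0; 0, (p : ℚ_[p]) ^ d] * k₂) ↔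
      (a + b = c + d ∧ a ≤ c) := by
  have hp1 : (1:ℝ) < (p:ℝ) := by exact_mod_cast (Fact.out : p.Prime).one_lt
  have hpR0 : (0:ℝ) < (p:ℝ) := lt_trans one_pos hp1
  have hp0 : (p : ℚ_[p]) ≠ 0 := Nat.cast_ne_zero.mpr (Fact.out : p.Prime).ne_zero
  constructor
  · rintro ⟨u, k, k₁, k₂, hk, hk₁, hk₂, heq⟩
    -- determinant comparison
    have hdet := congrArg Matrix.det heq
    simp only [Matrix.det_mul, Matrix.det_fin_two_of] at hdet
    have hdn := congrArg norm hdet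
    simp only [norm_mul, hk.2, hk₁.2, hk₂.2, mul_one, one_mul, mul_zero, zero_mul,
      sub_zero, Padic.norm_p_zpow] at hdn
    rw [← zpow_add₀ hpR0.ne', ← zpow_add₀ hpR0.ne'] at hdn
    have hsum : a + b = c + d := by
      have := zpow_right_injective₀ hpR0 hp1.ne' hdn
      omega
    refine ⟨hsum, ?_⟩
    -- entry equations in the bottom row
    have h0 := congrFun (congrFun heq 1) 0
    have h1 := congrFun (congrFun heq 1) 1
    simp only [Matrix.mul_apply, Fin.sum_univ_two] at h0 h1
    simp at h0 h1
    -- the bottom row of k has an entry of norm 1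
    have hmax : (1:ℝ) ≤ max ‖k 1 0‖ ‖k 1 1‖ := by
      have hd := hk.2
      rw [Matrix.det_fin_two] at hd
      calc (1:ℝ) = ‖k 0 0 * k 1 1 - k 0 1 * k 1 0‖ := hd.symm
        _ ≤ max ‖k 0 0 * k 1 1‖ ‖k 0 1 * k 1 0‖ := by
            simpa [sub_eq_add_neg] using
              Padic.nonarchimedean (k 0 0 * k 1 1) (-(k 0 1 * k 1 0))
        _ ≤ max ‖k 1 1‖ ‖k 1 0‖ := by
            refine max_le_max ?_ ?_ <;> rw [norm_mul]
            · exact mul_le_of_le_one_left (norm_nonneg _) (hk.1 0 0)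
            · exact mul_le_of_le_one_left (norm_nonneg _) (hk.1 0 1)
        _ = max ‖k 1 0‖ ‖k 1 1‖ := max_comm _ _
    -- bound on RHS bottom-row entries
    have hbound : ∀ j, ‖k₁ 1 0 * (p:ℚ_[p])^c * k₂ 0 j + k₁ 1 1 * (p:ℚ_[p])^d * k₂ 1 j‖
        ≤ (p:ℝ)^(-d) := by
      intro j
      refine le_trans (Padic.nonarchimedean _ _) (max_le ?_ ?_)
      · calc ‖k₁ 1 0 * (p:ℚ_[p])^c * k₂ 0 j‖
            = ‖k₁ 1 0‖ * (p:ℝ)^(-c) * ‖k₂ 0 j‖ := by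
              rw [norm_mul, norm_mul, Padic.norm_p_zpow]
          _ ≤ 1 * (p:ℝ)^(-c) * 1 := by
              gcongr
              · exact hk₁.1 1 0
              · exact hk₂.1 0 j
          _ ≤ (p:ℝ)^(-d) := by
              rw [one_mul, mul_one]
              exact zpow_le_zpow_right₀ hp1.le (by omega)
      · calc ‖k₁ 1 1 * (p:ℚ_[p])^d * k₂ 1 j‖
            = ‖k₁ 1 1‖ * (p:ℝ)^(-d) * ‖k₂ 1 j‖ := by
              rw [norm_mul, norm_mul, Padic.norm_p_zpow]
          _ ≤ 1 * (p:ℝ)^(-d) * 1 := by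
              gcongr
              · exact hk₁.1 1 1
              · exact hk₂.1 1 j
          _ ≤ (p:ℝ)^(-d) := by rw [one_mul, mul_one]
    have hfin : (p:ℝ)^(-b) ≤ (p:ℝ)^(-d) := by
      rcases le_total ‖k 1 0‖ ‖k 1 1‖ with h | h
      · have h11 : (1:ℝ) ≤ ‖k 1 1‖ := by rwa [max_eq_right h] at hmax
        calc (p:ℝ)^(-b) = (p:ℝ)^(-b) * 1 := (mul_one _).symm
          _ ≤ (p:ℝ)^(-b) * ‖k 1 1‖ :=
              mul_le_mul_of_nonneg_left h11 (zpow_nonneg hpR0.le _)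
          _ = ‖(p:ℚ_[p])^b * k 1 1‖ := by rw [norm_mul, Padic.norm_p_zpow]
          _ ≤ (p:ℝ)^(-d) := by rw [h1]; exact hbound 1
      · have h10 : (1:ℝ) ≤ ‖k 1 0‖ := by rwa [max_eq_left h] at hmax
        calc (p:ℝ)^(-b) = (p:ℝ)^(-b) * 1 := (mul_one _).symm
          _ ≤ (p:ℝ)^(-b) * ‖k 1 0‖ :=
              mul_le_mul_of_nonneg_left h10 (zpow_nonneg hpR0.le _)
          _ = ‖(p:ℚ_[p])^b * k 1 0‖ := by rw [norm_mul, Padic.norm_p_zpow]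
          _ ≤ (p:ℝ)^(-d) := by rw [h0]; exact hbound 0
    have := (zpow_le_zpow_iff_right₀ hp1).mp hfin
    omega
  · rintro ⟨hsum, hac⟩
    refine ⟨(p:ℚ_[p])^(d-b), 1, !![0, 1; -1, (p:ℚ_[p])^(b-d)],
      !![1, 0; (p:ℚ_[p])^(a-d), 1], ?_, ?_, ?_, ?_⟩
    · refine ⟨fun i j => ?_, by simp⟩
      fin_cases i <;> fin_cases j <;> simp [Matrix.one_apply]
    · constructor
      · intro i j
        fin_cases i <;> fin_cases j <;>
          simp [Padic.norm_p_zpow] <;>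
          exact zpow_le_one_of_nonpos₀ hp1.le (by omega)
      · rw [Matrix.det_fin_two_of]
        norm_num
    · constructor
      · intro i j
        fin_cases i <;> fin_cases j <;>
          simp [Padic.norm_p_zpow] <;>
          exact zpow_le_one_of_nonpos₀ hp1.le (by omega)
      · rw [Matrix.det_fin_two_of]
        norm_num
    · ext i j
      fin_cases i <;> fin_cases j <;>
        simp [Matrix.mul_apply, Fin.sum_univ_two, ← zpow_add₀ hp0] <;>
        ring_nf <;> rw [show b + a - d = c from by omega] <;> ring
end
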